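/- arXiv:2511.12146 — 4 statements merged into one kernel-verified Lean document; each statement's English description precedes it below -/
import Mathlib

section
/- Let m, p ∈ ℕ and let B_i > 0, β_i > 0 (for i = 1,…,m) and A_j > 0, α_j > 0 (for j = 1,…,p) be real parameters satisfying ∑_{i=1}^m β_i − ∑_{j=1}^p α_j < 1. Then the generalized Wright series Ψ(z) = ∑_{k=0}^∞ (∏_{i=1}^m Γ(B_i + β_i k) / ∏_{j=1}^p Γ(A_j + α_j k)) · z^k / k! is absolutely convergent for every z ∈ ℂ (i.e., the power series has infinite radius of convergence, so Ψ defines an entire function). -/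
/-!
Ratio test. By log-convexity of `Γ` on `(0, ∞)`, the slope of `log Γ` on `[x, x + b]` lies between
its slopes `log (x - 1)` and `log (x + b)` on the adjacent unit intervals, so
`(x - 1) ^ b ≤ Γ (x + b) / Γ x ≤ (x + b) ^ b`. Hence `|c (k + 1)| ≤ C (k + 1) ^ (∑ β - ∑ α) |c k|` for the
Gamma quotients `c k` and large `k`; the factor `z / (k + 1)` coming from `k!` makes the ratio of
consecutive terms tend to `0`, since `∑ β - ∑ α < 1`.
-/

open Real Filter Topology

namespace Real

theorem Gamma_add_le_Gamma_mul_rpow {x b : ℝ} (hx : 0 < x) (hb : 0 < b) :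
    Gamma (x + b) ≤ Gamma x * (x + b) ^ b := by
  have hxb : 0 < x + b := by linarith
  have hslope := convexOn_log_Gamma.slope_mono_adjacent (x := x) (y := x + b) (z := x + b + 1)
    hx (by simp only [Set.mem_Ioi]; linarith) (by linarith) (by linarith)
  simp only [Function.comp_def, Gamma_add_one hxb.ne',
    log_mul hxb.ne' (Gamma_pos_of_pos hxb).ne', add_sub_cancel_left, add_sub_cancel_right,
    div_one] at hslope
  rw [div_le_iff₀ hb, sub_le_iff_le_add, mul_comm, ← log_rpow hxb,
    ← log_mul (rpow_pos_of_pos hxb b).ne' (Gamma_pos_of_pos hx).ne'] at hslope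
  rw [mul_comm]
  exact (log_le_log_iff (Gamma_pos_of_pos hxb) (by positivity)).1 hslope

theorem Gamma_mul_rpow_le_Gamma_add {x b : ℝ} (hx : 1 < x) (hb : 0 < b) :
    Gamma x * (x - 1) ^ b ≤ Gamma (x + b) := by
  have hx1 : 0 < x - 1 := by linarith
  have hslope := convexOn_log_Gamma.slope_mono_adjacent (x := x - 1) (y := x) (z := x + b)
    hx1 (by simp only [Set.mem_Ioi]; linarith) (by linarith) (by linarith)
  have hlog : log (Gamma x) - log (Gamma (x - 1)) = log (x - 1) := by
    have hGx : Gamma x = (x - 1) * Gamma (x - 1) := by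
      rw [← Gamma_add_one hx1.ne', sub_add_cancel]
    rw [hGx, log_mul hx1.ne' (Gamma_pos_of_pos hx1).ne', add_sub_cancel_right]
  simp only [Function.comp_def, sub_sub_cancel, add_sub_cancel_left, div_one, hlog] at hslope
  rw [le_div_iff₀ hb, le_sub_iff_add_le, mul_comm, ← log_rpow hx1, add_comm,
    ← log_mul (Gamma_pos_of_pos (by linarith)).ne' (rpow_pos_of_pos hx1 b).ne'] at hslope
  exact (log_le_log_iff (by positivity) (Gamma_pos_of_pos (by linarith))).1 hslope

theorem Gamma_add_mul_add_one_le {B β n : ℝ} (hβ : 0 < β) (hn : 0 ≤ n) (hpos : 0 < B + β * n) :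
    Gamma (B + β * (n + 1)) ≤ (|B| + β) ^ β * (n + 1) ^ β * Gamma (B + β * n) := by
  have hle : B + β * n + β ≤ (|B| + β) * (n + 1) := by
    nlinarith [le_abs_self B, abs_nonneg B]
  calc Gamma (B + β * (n + 1)) = Gamma (B + β * n + β) := by ring_nf
    _ ≤ Gamma (B + β * n) * (B + β * n + β) ^ β := Gamma_add_le_Gamma_mul_rpow hpos hβ
    _ ≤ Gamma (B + β * n) * ((|B| + β) * (n + 1)) ^ β := by gcongr
    _ = (|B| + β) ^ β * (n + 1) ^ β * Gamma (B + β * n) := by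
        rw [mul_rpow (by positivity) (by linarith)]
        ring

theorem le_Gamma_add_mul_add_one {A α n : ℝ} (hα : 0 < α) (hn : 0 ≤ n)
    (hle : α / 2 * (n + 1) ≤ A + α * n - 1) :
    (α / 2) ^ α * (n + 1) ^ α * Gamma (A + α * n) ≤ Gamma (A + α * (n + 1)) := by
  have hx : 1 < A + α * n := by nlinarith
  calc (α / 2) ^ α * (n + 1) ^ α * Gamma (A + α * n)
      = Gamma (A + α * n) * (α / 2 * (n + 1)) ^ α := by
        rw [mul_rpow (by positivity) (by linarith)]
        ring
    _ ≤ Gamma (A + α * n) * (A + α * n - 1) ^ α := by gcongr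
    _ ≤ Gamma (A + α * n + α) := Gamma_mul_rpow_le_Gamma_add hx hα
    _ = Gamma (A + α * (n + 1)) := by ring_nf

end Real

section Products

variable {ι : Type*} [Fintype ι]

theorem prod_Gamma_add_mul_add_one_le {B β : ι → ℝ} {n : ℝ} (hβ : ∀ i, 0 < β i) (hn : 0 ≤ n)
    (hpos : ∀ i, 0 < B i + β i * n) :
    ∏ i, Gamma (B i + β i * (n + 1)) ≤
      (∏ i, (|B i| + β i) ^ β i) * (n + 1) ^ (∑ i, β i) * ∏ i, Gamma (B i + β i * n) := by
  rw [rpow_sum_of_pos (by linarith), ← Finset.prod_mul_distrib, ← Finset.prod_mul_distrib]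
  refine Finset.prod_le_prod (fun i _ => (Gamma_pos_of_pos ?_).le)
    fun i _ => Gamma_add_mul_add_one_le (hβ i) hn (hpos i)
  nlinarith [hpos i, hβ i]

theorem le_prod_Gamma_add_mul_add_one {A α : ι → ℝ} {n : ℝ} (hα : ∀ j, 0 < α j) (hn : 0 ≤ n)
    (hle : ∀ j, α j / 2 * (n + 1) ≤ A j + α j * n - 1) :
    (∏ j, (α j / 2) ^ α j) * (n + 1) ^ (∑ j, α j) * ∏ j, Gamma (A j + α j * n) ≤
      ∏ j, Gamma (A j + α j * (n + 1)) := by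
  rw [rpow_sum_of_pos (by linarith), ← Finset.prod_mul_distrib, ← Finset.prod_mul_distrib]
  refine Finset.prod_le_prod (fun j _ => ?_) fun j _ => le_Gamma_add_mul_add_one (hα j) hn (hle j)
  have hα2 : 0 < α j / 2 := half_pos (hα j)
  have hΓ : 0 < Gamma (A j + α j * n) := Gamma_pos_of_pos (by nlinarith [hle j, hα j])
  positivity

end Products

section Wright

variable {ι κ : Type*} [Fintype ι] [Fintype κ]

noncomputable def wrightCoeff (B β : ι → ℝ) (A α : κ → ℝ) (x : ℝ) : ℝ :=
  (∏ i, Gamma (B i + β i * x)) / ∏ j, Gamma (A j + α j * x)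

theorem abs_wrightCoeff_add_one_le {B β : ι → ℝ} {A α : κ → ℝ} {n : ℝ}
    (hβ : ∀ i, 0 < β i) (hα : ∀ j, 0 < α j) (hn : 0 ≤ n) (hpos : ∀ i, 0 < B i + β i * n)
    (hle : ∀ j, α j / 2 * (n + 1) ≤ A j + α j * n - 1) :
    |wrightCoeff B β A α (n + 1)| ≤
      (∏ i, (|B i| + β i) ^ β i) / (∏ j, (α j / 2) ^ α j) * (n + 1) ^ (∑ i, β i - ∑ j, α j) *
        |wrightCoeff B β A α n| := by
  have hP : 0 < ∏ i, Gamma (B i + β i * n) :=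
    Finset.prod_pos fun i _ => Gamma_pos_of_pos (hpos i)
  have hP' : 0 < ∏ i, Gamma (B i + β i * (n + 1)) :=
    Finset.prod_pos fun i _ => Gamma_pos_of_pos (by nlinarith [hpos i, hβ i])
  have hQ : 0 < ∏ j, Gamma (A j + α j * n) :=
    Finset.prod_pos fun j _ => Gamma_pos_of_pos (by nlinarith [hle j, hα j])
  have hQ' : 0 < ∏ j, Gamma (A j + α j * (n + 1)) :=
    Finset.prod_pos fun j _ => Gamma_pos_of_pos (by nlinarith [hle j, hα j])
  have hcβ : 0 < ∏ i, (|B i| + β i) ^ β i :=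
    Finset.prod_pos fun i _ => rpow_pos_of_pos (by linarith [abs_nonneg (B i), hβ i]) _
  have hcα : 0 < ∏ j, (α j / 2) ^ α j :=
    Finset.prod_pos fun j _ => rpow_pos_of_pos (half_pos (hα j)) _
  unfold wrightCoeff
  rw [abs_of_pos (div_pos hP' hQ'), abs_of_pos (div_pos hP hQ), rpow_sub (by linarith)]
  calc (∏ i, Gamma (B i + β i * (n + 1))) / ∏ j, Gamma (A j + α j * (n + 1))
      ≤ (∏ i, (|B i| + β i) ^ β i) * (n + 1) ^ (∑ i, β i) * (∏ i, Gamma (B i + β i * n)) /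
          ((∏ j, (α j / 2) ^ α j) * (n + 1) ^ (∑ j, α j) * ∏ j, Gamma (A j + α j * n)) :=
        div_le_div₀ (by positivity) (prod_Gamma_add_mul_add_one_le hβ hn hpos) (by positivity)
          (le_prod_Gamma_add_mul_add_one hα hn hle)
    _ = _ := by
        field_simp

end Wright

theorem eventually_lt_add_mul_natCast {β : ℝ} (hβ : 0 < β) (B c : ℝ) :
    ∀ᶠ k : ℕ in atTop, c < B + β * k :=
  (tendsto_atTop_add_const_left _ B
    (tendsto_natCast_atTop_atTop.const_mul_atTop hβ)).eventually_gt_atTop c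

theorem summable_norm_mul_pow_div_factorial {a : ℕ → ℝ} {c σ : ℝ} (hσ : σ < 1)
    (ha : ∀ᶠ k : ℕ in atTop, |a (k + 1)| ≤ c * ((k : ℝ) + 1) ^ σ * |a k|) (z : ℂ) :
    Summable fun k => ‖(a k : ℂ) * z ^ k / (k.factorial : ℂ)‖ := by
  have hnorm : ∀ k, ‖(a k : ℂ) * z ^ k / (k.factorial : ℂ)‖ = |a k| * ‖z‖ ^ k / k.factorial := by
    intro k
    rw [norm_div, norm_mul, Complex.norm_real, Complex.norm_natCast, norm_pow, Real.norm_eq_abs]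
  have hρ : Tendsto (fun k : ℕ => c * ‖z‖ * ((k : ℝ) + 1) ^ (σ - 1)) atTop (𝓝 0) := by
    have h := (tendsto_rpow_neg_atTop (by linarith : 0 < 1 - σ)).comp
      (tendsto_atTop_add_const_right _ 1 tendsto_natCast_atTop_atTop)
    simpa using h.const_mul (c * ‖z‖)
  refine summable_of_ratio_norm_eventually_le (r := 1 / 2) (by norm_num) ?_
  filter_upwards [ha, hρ.eventually (eventually_le_nhds (by norm_num : (0 : ℝ) < 1 / 2))]
    with k hk hρk
  rw [norm_norm, norm_norm, hnorm, hnorm]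
  calc |a (k + 1)| * ‖z‖ ^ (k + 1) / (k + 1).factorial
      ≤ c * ((k : ℝ) + 1) ^ σ * |a k| * ‖z‖ ^ (k + 1) / (k + 1).factorial := by gcongr
    _ = c * ‖z‖ * ((k : ℝ) + 1) ^ (σ - 1) * (|a k| * ‖z‖ ^ k / k.factorial) := by
        rw [rpow_sub_one (by positivity), Nat.factorial_succ, pow_succ]
        push_cast
        field_simp
    _ ≤ 1 / 2 * (|a k| * ‖z‖ ^ k / k.factorial) := by gcongr

theorem generalized_wright_series_abs_convergent_general
    (m p : ℕ) (B β : Fin m → ℝ) (A α : Fin p → ℝ)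
    (hβ : ∀ i, 0 < β i)
    (hα : ∀ j, 0 < α j)
    (hconv : (∑ i, β i) - (∑ j, α j) < 1) (z : ℂ) :
    Summable (fun k : ℕ =>
      ‖(((∏ i, Real.Gamma (B i + β i * k)) / (∏ j, Real.Gamma (A j + α j * k)) : ℝ) : ℂ)
        * z ^ k / (Nat.factorial k : ℂ)‖) := by
  refine summable_norm_mul_pow_div_factorial (a := fun k => wrightCoeff B β A α k)
    (c := (∏ i, (|B i| + β i) ^ β i) / (∏ j, (α j / 2) ^ α j)) hconv ?_ z
  have hB := eventually_all.2 fun i => eventually_lt_add_mul_natCast (hβ i) (B i) 0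
  have hA := eventually_all.2 fun j =>
    eventually_lt_add_mul_natCast (half_pos (hα j)) (A j - 1 - α j / 2) 0
  filter_upwards [hB, hA] with k hBk hAk
  rw [Nat.cast_succ]
  exact abs_wrightCoeff_add_one_le hβ hα k.cast_nonneg hBk fun j => by linarith [hAk j]

/-- The generalized Wright series is absolutely convergent for every `z ∈ ℂ`
(infinite radius of convergence), provided `∑ βᵢ - ∑ αⱼ < 1`. -/
theorem generalized_wright_series_abs_convergent
    (m p : ℕ) (B β : Fin m → ℝ) (A α : Fin p → ℝ)
    (hB : ∀ i, 0 < B i) (hβ : ∀ i, 0 < β i)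
    (hA : ∀ j, 0 < A j) (hα : ∀ j, 0 < α j)
    (hconv : (∑ i, β i) - (∑ j, α j) < 1) (z : ℂ) :
    Summable (fun k : ℕ =>
      ‖(((∏ i, Real.Gamma (B i + β i * k)) / (∏ j, Real.Gamma (A j + α j * k)) : ℝ) : ℂ)
        * z ^ k / (Nat.factorial k : ℂ)‖) :=
  generalized_wright_series_abs_convergent_general m p B β A α hβ hα hconv z
end

section
/- Let ν be a Borel probability measure on (0,∞) with Gamma-ratio moments ∫_0^∞ τ^k dν(τ) = (1/K) ∏_{i=1}^m Γ(b_i + β_i(k+1)) / ∏_{j=1}^p Γ(a_j + α_j(k+1)) for all k ∈ ℕ, where β_i > 0, b_i + β_i > 0, α_j > 0, a_j + α_j > 0 and K = ∏_{i=1}^m Γ(b_i + β_i)/∏_{j=1}^p Γ(a_j + α_j). Let γ be the standard Gaussian measure on ℝ, let 𝐇 ∈ (0,1) and t ≥ 0. Then for every n ∈ ℕ: ∫_0^∞ ∫_ℝ (t^𝐇 √τ · x)^{2n+1} dγ(x) dν(τ) = 0 and ∫_0^∞ ∫_ℝ (t^𝐇 √τ · x)^{2n} dγ(x) dν(τ)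 = (1/K) · (∏_{i=1}^m Γ(b_i + β_i(n+1)) / ∏_{j=1}^p Γ(a_j + α_j(n+1))) · (2n)!/(n! 2^n) · t^{2n𝐇}; these are the moments of the generalized Fox-H process X_t^{𝐇,A,B} at time t, realized via its representation √Y · B_t^𝐇 with B_t^𝐇 ~ N(0, t^{2𝐇}). -/
/-!
The odd moments of `γ` vanish because `γ` is invariant under `x ↦ -x`; the even ones reduce, by
symmetry and the substitution `x² = 2s`, to `Γ(n + 1/2)`, which gives `(2n - 1)‼ = (2n)!/(n! 2ⁿ)`.
Since `(t^𝐇 √τ)^{2n} = t^{2n𝐇} τⁿ` on the support of `ν`, integrating in `τ` brings in the `n`-th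
Gamma-ratio moment of `ν`.
-/

open MeasureTheory ProbabilityTheory Real
open scoped Nat NNReal

theorem Nat.doubleFactorial_two_mul_sub_one_mul (n : ℕ) :
    (2 * n - 1)‼ * (2 ^ n * n !) = (2 * n)! := by
  cases n with
  | zero => rfl
  | succ n =>
    rw [← Nat.doubleFactorial_two_mul, show 2 * (n + 1) = 2 * n + 1 + 1 by ring,
      Nat.factorial_eq_mul_doubleFactorial, Nat.add_sub_cancel, mul_comm]

lemma Nat.cast_doubleFactorial_two_mul_sub_one (n : ℕ) :
    ((2 * n - 1)‼ : ℝ) = (2 * n)! / (n ! * 2 ^ n) := by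
  rw [← Nat.doubleFactorial_two_mul_sub_one_mul]
  push_cast
  field_simp

lemma integral_pow_odd_gaussianReal (v : ℝ≥0) (n : ℕ) :
    ∫ x, x ^ (2 * n + 1) ∂gaussianReal 0 v = 0 := by
  have h := integral_map (μ := gaussianReal 0 v) (f := fun x : ℝ ↦ x ^ (2 * n + 1))
    measurable_neg.aemeasurable (by fun_prop)
  rw [gaussianReal_map_neg, neg_zero] at h
  simp_rw [Odd.neg_pow (odd_two_mul_add_one n), integral_neg] at h
  linarith

lemma integral_Ioi_pow_mul_exp_neg_sq_div_two (n : ℕ) :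
    ∫ x in Set.Ioi (0 : ℝ), x ^ (2 * n) * exp (-x ^ 2 / 2)
      = 2 ^ n * √2 / 2 * Gamma (n + 1 / 2) := by
  have h := integral_rpow_mul_exp_neg_mul_rpow (p := 2) (q := (2 * n : ℕ)) (b := 1 / 2)
    two_pos (neg_one_lt_zero.trans_le (Nat.cast_nonneg _)) (by norm_num)
  simp only [rpow_two, rpow_natCast] at h
  simp_rw [show ∀ x : ℝ, -x ^ 2 / 2 = -(1 / 2) * x ^ 2 from fun x ↦ by ring]
  rw [h, show (-((2 * n : ℕ) + 1) / 2 : ℝ) = -(n + 1 / 2) by push_cast; ring,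
    show (((2 * n : ℕ) + 1) / 2 : ℝ) = n + 1 / 2 by push_cast; ring,
    rpow_neg (by norm_num), ← inv_rpow (by norm_num), inv_div, div_one,
    rpow_add two_pos, rpow_natCast, ← sqrt_eq_rpow]
  ring

lemma integral_pow_mul_exp_neg_sq_div_two (n : ℕ) :
    ∫ x, x ^ (2 * n) * exp (-x ^ 2 / 2) = √(2 * π) * (2 * n - 1)‼ := by
  have h := integral_comp_abs (f := fun x : ℝ ↦ x ^ (2 * n) * exp (-x ^ 2 / 2))
  simp only [pow_mul, sq_abs] at h
  simp only [← pow_mul] at h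
  rw [h, integral_Ioi_pow_mul_exp_neg_sq_div_two, Gamma_nat_add_half, sqrt_mul zero_le_two]
  field_simp

lemma integral_pow_even_gaussianReal (n : ℕ) :
    ∫ x, x ^ (2 * n) ∂gaussianReal 0 1 = (2 * n - 1)‼ := by
  simp only [integral_gaussianReal_eq_integral_smul one_ne_zero, gaussianPDFReal, smul_eq_mul,
    NNReal.coe_one, mul_one, sub_zero, mul_assoc, integral_const_mul]
  simp only [mul_comm (exp _), integral_pow_mul_exp_neg_sq_div_two]
  field_simp

lemma integral_pow_even_scaled_gaussianReal {t H τ : ℝ} (ht : 0 ≤ t) (hτ : 0 ≤ τ) (n : ℕ) :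
    ∫ x, (t ^ H * √τ * x) ^ (2 * n) ∂gaussianReal 0 1
      = t ^ (2 * (n : ℝ) * H) * ((2 * n)! / (n ! * 2 ^ n)) * τ ^ n := by
  have htH : (t ^ H) ^ (2 * n) = t ^ (2 * (n : ℝ) * H) := by
    rw [← rpow_mul_natCast ht, Nat.cast_mul, Nat.cast_two, mul_comm]
  simp_rw [mul_pow (t ^ H * √τ)]
  rw [integral_const_mul, integral_pow_even_gaussianReal,
    Nat.cast_doubleFactorial_two_mul_sub_one, mul_pow, htH, pow_mul √τ, sq_sqrt hτ]
  ring

theorem generalized_FoxH_process_moments_general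
    (m p : ℕ) (b β : Fin m → ℝ) (a α : Fin p → ℝ)
    (K : ℝ)
    (ν : Measure ℝ) (hsupp : ν (Set.Iic 0) = 0)
    (hmom : ∀ k : ℕ, ∫ τ, τ ^ k ∂ν
      = (1 / K) * (∏ i, Real.Gamma (b i + β i * (k + 1)))
          / (∏ j, Real.Gamma (a j + α j * (k + 1))))
    (H : ℝ) (t : ℝ) (ht : 0 ≤ t) (n : ℕ) :
    (∫ τ, (∫ x, (t ^ H * Real.sqrt τ * x) ^ (2 * n + 1) ∂(gaussianReal 0 1)) ∂ν) = 0 ∧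
    (∫ τ, (∫ x, (t ^ H * Real.sqrt τ * x) ^ (2 * n) ∂(gaussianReal 0 1)) ∂ν)
      = (1 / K) * ((∏ i, Real.Gamma (b i + β i * (n + 1)))
            / (∏ j, Real.Gamma (a j + α j * (n + 1))))
          * ((Nat.factorial (2 * n) : ℝ) / ((Nat.factorial n : ℝ) * 2 ^ n))
          * t ^ (2 * (n : ℝ) * H) := by
  refine ⟨by simp_rw [mul_pow, integral_const_mul, integral_pow_odd_gaussianReal, mul_zero,
    integral_zero], ?_⟩
  have hpos : ∀ᵐ τ ∂ν, 0 < τ := by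
    simp only [ae_iff, not_lt]
    exact hsupp
  calc (∫ τ, (∫ x, (t ^ H * √τ * x) ^ (2 * n) ∂gaussianReal 0 1) ∂ν)
      = ∫ τ, t ^ (2 * (n : ℝ) * H) * ((2 * n)! / (n ! * 2 ^ n)) * τ ^ n ∂ν :=
        integral_congr_ae <| hpos.mono fun τ hτ ↦
          integral_pow_even_scaled_gaussianReal ht hτ.le n
    _ = _ := by
        rw [integral_const_mul, hmom]
        ring

/-- Moments of the generalized Fox-H process `X_t^{𝐇,A,B}` at time `t`, realized via its
representation `t^𝐇 √Y G` with `Y ~ ν` (Gamma-ratio moments) independent of the standard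
Gaussian `G`: odd moments vanish and even ones are given by the Gamma-ratio formula
times `(2n)!/(n! 2^n) · t^{2n𝐇}`. -/
theorem generalized_FoxH_process_moments
    (m p : ℕ) (b β : Fin m → ℝ) (a α : Fin p → ℝ)
    (hβ : ∀ i, 0 < β i) (hbβ : ∀ i, 0 < b i + β i)
    (hα : ∀ j, 0 < α j) (haα : ∀ j, 0 < a j + α j)
    (K : ℝ) (hK : K = (∏ i, Real.Gamma (b i + β i)) / (∏ j, Real.Gamma (a j + α j)))
    (ν : Measure ℝ) [IsProbabilityMeasure ν] (hsupp : ν (Set.Iic 0) = 0)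
    (hint : ∀ k : ℕ, Integrable (fun τ : ℝ => τ ^ k) ν)
    (hmom : ∀ k : ℕ, ∫ τ, τ ^ k ∂ν
      = (1 / K) * (∏ i, Real.Gamma (b i + β i * (k + 1)))
          / (∏ j, Real.Gamma (a j + α j * (k + 1))))
    (H : ℝ) (hH : H ∈ Set.Ioo (0 : ℝ) 1) (t : ℝ) (ht : 0 ≤ t) (n : ℕ) :
    (∫ τ, (∫ x, (t ^ H * Real.sqrt τ * x) ^ (2 * n + 1) ∂(gaussianReal 0 1)) ∂ν) = 0 ∧
    (∫ τ, (∫ x, (t ^ H * Real.sqrt τ * x) ^ (2 * n) ∂(gaussianReal 0 1)) ∂ν)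
      = (1 / K) * ((∏ i, Real.Gamma (b i + β i * (n + 1)))
            / (∏ j, Real.Gamma (a j + α j * (n + 1))))
          * ((Nat.factorial (2 * n) : ℝ) / ((Nat.factorial n : ℝ) * 2 ^ n))
          * t ^ (2 * (n : ℝ) * H) :=
  generalized_FoxH_process_moments_general m p b β a α K ν hsupp hmom H t ht n
end

section
/- Let 𝐇 ∈ (0,1) and for t ≥ 0 define φ_t : ℝ → ℝ by φ_t(x) = (t − x)_+^{𝐇−1/2} − (−x)_+^{𝐇−1/2}, where y_+^a := y^a if y > 0 and 0 otherwise. Let c_𝐇 := 1/(2𝐇) + ∫_0^∞ ((1+s)^{𝐇−1/2} − s^{𝐇−1/2})² ds. Then for all t₁, t₂ ≥ 0, φ_{t₁} and φ_{t₂} are square-integrable on ℝ and ∫_ℝ φ_{t₁}(x) φ_{t₂}(x) dx = (c_𝐇/2) · (t₁^{2𝐇} + t₂^{2𝐇} − |t₁ − t₂|^{2𝐇}). -/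
open MeasureTheory

/-- `y_+^a := y^a` if `y > 0` and `0` otherwise. -/
noncomputable def plusPow (y a : ℝ) : ℝ := if 0 < y then y ^ a else 0

/-- The fractional kernel `φ_t(x) = (t−x)_+^{𝐇−1/2} − (−x)_+^{𝐇−1/2}`. -/
noncomputable def fracKernel (H t x : ℝ) : ℝ :=
  plusPow (t - x) (H - 1 / 2) - plusPow (-x) (H - 1 / 2)

/-- The normalizing constant `c_𝐇 = 1/(2𝐇) + ∫₀^∞ ((1+s)^{𝐇−1/2} − s^{𝐇−1/2})² ds`. -/
noncomputable def cH (H : ℝ) : ℝ :=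
  1 / (2 * H) + ∫ s in Set.Ioi (0 : ℝ), ((1 + s) ^ (H - 1 / 2) - s ^ (H - 1 / 2)) ^ 2

/-! By the translation identity `φ_{t₁} − φ_{t₂} = φ_{t₁−t₂}(· − t₂)` and the scaling identity
`φ_t(x) = t^{𝐇−1/2} φ_1(x/t)`, polarization reduces everything to `‖φ_1‖² = c_𝐇`. On `(0, 1)` the
kernel `φ_1` is `(1 − x)^{𝐇−1/2}`, contributing `1/(2𝐇)`; on `x < 0`, after `x ↦ −x`, its square is
the integrand of `c_𝐇`, which is integrable near `0` because `s^{𝐇−1/2}` is square-integrable there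
and at infinity because it is `O(s^{2𝐇−3})` by the mean value theorem. -/

open Set Real

lemma integral_mul_eq_polarization {α : Type*} [MeasurableSpace α] {μ : Measure α}
    {f g : α → ℝ} (hf : Integrable (fun x => f x ^ 2) μ) (hg : Integrable (fun x => g x ^ 2) μ)
    (hfg : Integrable (fun x => (f x - g x) ^ 2) μ) :
    ∫ x, f x * g x ∂μ = (∫ x, f x ^ 2 ∂μ + ∫ x, g x ^ 2 ∂μ - ∫ x, (f x - g x) ^ 2 ∂μ) / 2 := by
  rw [← integral_add hf hg, ← integral_sub (f := fun x => f x ^ 2 + g x ^ 2) (hf.add hg) hfg,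
    ← integral_div]
  congr 1 with x
  ring

lemma abs_one_add_rpow_sub_rpow_le {a s : ℝ} (ha : a ≤ 1) (hs : 0 < s) :
    |(1 + s) ^ a - s ^ a| ≤ |a| * s ^ (a - 1) := by
  obtain ⟨c, hc, hslope⟩ := exists_hasDerivAt_eq_slope (fun x : ℝ => x ^ a)
    (fun x => a * x ^ (a - 1)) (lt_add_one s)
    (continuousOn_id.rpow_const fun x hx => Or.inl (hs.trans_le hx.1).ne')
    (fun x hx => hasDerivAt_rpow_const (Or.inl (hs.trans hx.1).ne'))
  have hmvt : (1 + s) ^ a - s ^ a = a * c ^ (a - 1) := by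
    rw [hslope, add_comm, add_sub_cancel_left, div_one]
  rw [hmvt, abs_mul, abs_of_pos (rpow_pos_of_pos (hs.trans hc.1) _)]
  exact mul_le_mul_of_nonneg_left (rpow_le_rpow_of_nonpos hs hc.1.le (by linarith)) (abs_nonneg a)

lemma rpow_sq_eq_rpow_mul_two {x : ℝ} (hx : 0 ≤ x) (a : ℝ) : (x ^ a) ^ 2 = x ^ (a * 2) := by
  rw [← rpow_two, ← rpow_mul hx]

section OneAddRpowSubRpow

variable {a : ℝ}

lemma integrableOn_Ioc_sq_one_add_rpow_sub_rpow (ha : -1 / 2 < a) :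
    IntegrableOn (fun s : ℝ => ((1 + s) ^ a - s ^ a) ^ 2) (Ioc 0 1) := by
  have hleft : MemLp (fun s : ℝ => (1 + s) ^ a) 2 (volume.restrict (Ioc 0 1)) := by
    refine (memLp_two_iff_integrable_sq (Measurable.aestronglyMeasurable (by fun_prop))).2 ?_
    refine (ContinuousOn.integrableOn_Icc ?_).mono_set Ioc_subset_Icc_self
    exact ((continuousOn_const.add continuousOn_id).rpow_const
      fun x hx => Or.inl (by linarith [hx.1] : (1 : ℝ) + x ≠ 0)).pow 2
  have hright : MemLp (fun s : ℝ => s ^ a) 2 (volume.restrict (Ioc 0 1)) := by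
    refine (memLp_two_iff_integrable_sq (by fun_prop)).2 ?_
    refine (intervalIntegral.intervalIntegrable_rpow' (by linarith : -1 < a * 2)).1.congr_fun
      (fun s hs => (rpow_sq_eq_rpow_mul_two hs.1.le a).symm) measurableSet_Ioc
  exact (hleft.sub hright).integrable_sq

lemma integrableOn_Ioi_one_sq_one_add_rpow_sub_rpow (ha : a < 1 / 2) :
    IntegrableOn (fun s : ℝ => ((1 + s) ^ a - s ^ a) ^ 2) (Ioi 1) := by
  refine ((integrableOn_Ioi_rpow_of_lt (by linarith : (a - 1) * 2 < -1) one_pos).const_mul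
    (a ^ 2)).mono' (by fun_prop) ?_
  filter_upwards [ae_restrict_mem measurableSet_Ioi] with s hs
  have hs₀ : (0 : ℝ) < s := one_pos.trans hs
  rw [norm_pow, norm_eq_abs, ← sq_abs a, ← rpow_sq_eq_rpow_mul_two hs₀.le, ← mul_pow]
  exact pow_le_pow_left₀ (abs_nonneg _) (abs_one_add_rpow_sub_rpow_le (by linarith) hs₀) 2

lemma integrableOn_Ioi_sq_one_add_rpow_sub_rpow (ha : a ∈ Ioo (-1 / 2) (1 / 2)) :
    IntegrableOn (fun s : ℝ => ((1 + s) ^ a - s ^ a) ^ 2) (Ioi 0) := by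
  rw [← Ioc_union_Ioi_eq_Ioi zero_le_one]
  exact (integrableOn_Ioc_sq_one_add_rpow_sub_rpow ha.1).union
    (integrableOn_Ioi_one_sq_one_add_rpow_sub_rpow ha.2)

end OneAddRpowSubRpow

section OneSubRpow

variable {r : ℝ}

lemma intervalIntegrable_one_sub_rpow (hr : -1 < r) :
    IntervalIntegrable (fun x : ℝ => (1 - x) ^ r) volume 0 1 := by
  have := (intervalIntegral.intervalIntegrable_rpow' hr (a := 0) (b := 1)).comp_sub_left 1
  rw [sub_zero, sub_self] at this
  exact this.symm

lemma integrableOn_Ioo_one_sub_rpow (hr : -1 < r) :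
    IntegrableOn (fun x : ℝ => (1 - x) ^ r) (Ioo 0 1) :=
  ((intervalIntegrable_iff_integrableOn_Ioc_of_le zero_le_one).1
    (intervalIntegrable_one_sub_rpow hr)).mono_set Ioo_subset_Ioc_self

lemma integral_Ioo_one_sub_rpow (hr : -1 < r) :
    ∫ x in Ioo 0 1, (1 - x) ^ r = 1 / (r + 1) := by
  rw [← integral_Ioc_eq_integral_Ioo, ← intervalIntegral.integral_of_le zero_le_one,
    intervalIntegral.integral_comp_sub_left (fun x => x ^ r), sub_self, sub_zero,
    integral_rpow (Or.inl hr), one_rpow, zero_rpow (by linarith), sub_zero]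

end OneSubRpow

section FracKernel

variable {H t x : ℝ}

lemma plusPow_mul_left (ht : 0 < t) (y a : ℝ) : plusPow (t * y) a = t ^ a * plusPow y a := by
  unfold plusPow
  by_cases hy : 0 < y
  · rw [if_pos (mul_pos ht hy), if_pos hy, mul_rpow ht.le hy.le]
  · rw [if_neg hy, if_neg (fun h => hy (pos_of_mul_pos_right h ht.le)), mul_zero]

lemma fracKernel_zero (H x : ℝ) : fracKernel H 0 x = 0 := by
  rw [fracKernel, zero_sub, sub_self]

lemma fracKernel_neg (H t x : ℝ) : fracKernel H (-t) x = -fracKernel H t (x + t) := by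
  rw [fracKernel, fracKernel, show -(x + t) = -t - x by ring, show t - (x + t) = -x by ring,
    neg_sub]

lemma fracKernel_sub_fracKernel (H t₁ t₂ x : ℝ) :
    fracKernel H t₁ x - fracKernel H t₂ x = fracKernel H (t₁ - t₂) (x - t₂) := by
  rw [fracKernel, fracKernel, fracKernel, show t₁ - t₂ - (x - t₂) = t₁ - x by ring,
    show -(x - t₂) = t₂ - x by ring]
  ring

lemma fracKernel_eq_rpow_mul_fracKernel_one (ht : 0 < t) (H x : ℝ) :
    fracKernel H t x = t ^ (H - 1 / 2) * fracKernel H 1 (x / t) := by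
  rw [fracKernel, fracKernel, mul_sub, ← plusPow_mul_left ht, ← plusPow_mul_left ht,
    mul_one_sub, mul_neg, mul_div_cancel₀ x ht.ne']

lemma fracKernel_apply_neg (ht : 0 ≤ t) (hx : 0 < x) :
    fracKernel H t (-x) = (t + x) ^ (H - 1 / 2) - x ^ (H - 1 / 2) := by
  rw [fracKernel, plusPow, plusPow, neg_neg, sub_neg_eq_add, if_pos (by linarith), if_pos hx]

lemma fracKernel_of_mem_Ico (hx : x ∈ Ico 0 t) : fracKernel H t x = (t - x) ^ (H - 1 / 2) := by
  rw [fracKernel, plusPow, plusPow, if_pos (sub_pos.2 hx.2), if_neg (by linarith [hx.1]),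
    sub_zero]

lemma fracKernel_of_le (hx : 0 ≤ x) (htx : t ≤ x) : fracKernel H t x = 0 := by
  rw [fracKernel, plusPow, plusPow, if_neg (by linarith), if_neg (by linarith), sub_zero]

end FracKernel

section FracKernelOne

variable {H : ℝ}

lemma integrableOn_Iic_fracKernel_one_sq (hH : H ∈ Ioo 0 1) :
    IntegrableOn (fun x => fracKernel H 1 x ^ 2) (Iic 0) := by
  rw [← Measure.map_neg_eq_self (volume : Measure ℝ),
    measurableEmbedding_neg.integrableOn_map_iff, neg_preimage, neg_Iic, neg_zero, integrableOn_Ici_iff_integrableOn_Ioi]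
  refine (integrableOn_Ioi_sq_one_add_rpow_sub_rpow (a := H - 1 / 2)
    ⟨by linarith [hH.1], by linarith [hH.2]⟩).congr_fun (fun x hx => ?_) measurableSet_Ioi
  simp only [Function.comp_apply, fracKernel_apply_neg zero_le_one hx]

lemma setIntegral_Iic_fracKernel_one_sq (H : ℝ) :
    ∫ x in Iic 0, fracKernel H 1 x ^ 2 =
      ∫ s in Ioi 0, ((1 + s) ^ (H - 1 / 2) - s ^ (H - 1 / 2)) ^ 2 := by
  have hneg := integral_comp_neg_Ioi 0 fun x => fracKernel H 1 x ^ 2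
  rw [neg_zero] at hneg
  rw [← hneg]
  exact setIntegral_congr_fun measurableSet_Ioi fun s hs => by
    rw [fracKernel_apply_neg zero_le_one hs, add_comm]

lemma fracKernel_one_sq_eqOn_Ioo (H : ℝ) :
    EqOn (fun x => fracKernel H 1 x ^ 2) (fun x => (1 - x) ^ (2 * H - 1)) (Ioo 0 1) :=
  fun x hx => by
    dsimp only
    rw [fracKernel_of_mem_Ico (Ioo_subset_Ico_self hx),
      rpow_sq_eq_rpow_mul_two (by linarith [hx.2]), show (H - 1 / 2) * 2 = 2 * H - 1 by ring]

lemma fracKernel_one_sq_eq_zero_of_mem_Ioi_sdiff_Ioo {x : ℝ} (hx : x ∈ Ioi 0 \ Ioo 0 1) :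
    fracKernel H 1 x ^ 2 = 0 := by
  rw [fracKernel_of_le (le_of_lt hx.1) (not_lt.1 fun h => hx.2 ⟨hx.1, h⟩), zero_pow two_ne_zero]

lemma integrableOn_Ioi_fracKernel_one_sq (hH : 0 < H) :
    IntegrableOn (fun x => fracKernel H 1 x ^ 2) (Ioi 0) :=
  ((integrableOn_Ioo_one_sub_rpow (by linarith)).congr_fun (fracKernel_one_sq_eqOn_Ioo H).symm
    measurableSet_Ioo).of_forall_sdiff_eq_zero measurableSet_Ioi
    fun _ hx => fracKernel_one_sq_eq_zero_of_mem_Ioi_sdiff_Ioo hx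

lemma setIntegral_Ioi_fracKernel_one_sq (hH : 0 < H) :
    ∫ x in Ioi 0, fracKernel H 1 x ^ 2 = 1 / (2 * H) := by
  rw [setIntegral_eq_of_subset_of_forall_sdiff_eq_zero measurableSet_Ioi Ioo_subset_Ioi_self
      fun _ hx => fracKernel_one_sq_eq_zero_of_mem_Ioi_sdiff_Ioo hx,
    setIntegral_congr_fun measurableSet_Ioo (fracKernel_one_sq_eqOn_Ioo H),
    integral_Ioo_one_sub_rpow (by linarith), sub_add_cancel]

lemma integrable_fracKernel_one_sq (hH : H ∈ Ioo 0 1) :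
    Integrable fun x => fracKernel H 1 x ^ 2 := by
  rw [← integrableOn_univ, ← Iic_union_Ioi (a := 0)]
  exact (integrableOn_Iic_fracKernel_one_sq hH).union (integrableOn_Ioi_fracKernel_one_sq hH.1)

lemma integral_fracKernel_one_sq (hH : H ∈ Ioo 0 1) :
    ∫ x, fracKernel H 1 x ^ 2 = cH H := by
  rw [← intervalIntegral.integral_Iic_add_Ioi (integrableOn_Iic_fracKernel_one_sq hH)
    (integrableOn_Ioi_fracKernel_one_sq hH.1), setIntegral_Iic_fracKernel_one_sq,
    setIntegral_Ioi_fracKernel_one_sq hH.1, cH, add_comm]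

end FracKernelOne

section FracKernelSq

variable {H : ℝ}

lemma fracKernel_sq_eq_of_pos {t : ℝ} (ht : 0 < t) (H : ℝ) :
    (fun x => fracKernel H t x ^ 2) = fun x => t ^ (2 * H - 1) * fracKernel H 1 (x / t) ^ 2 := by
  ext x
  rw [fracKernel_eq_rpow_mul_fracKernel_one ht, mul_pow, rpow_sq_eq_rpow_mul_two ht.le]
  ring_nf

lemma integrable_fracKernel_sq_of_pos (hH : H ∈ Ioo 0 1) {t : ℝ} (ht : 0 < t) :
    Integrable fun x => fracKernel H t x ^ 2 := by
  rw [fracKernel_sq_eq_of_pos ht]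
  exact ((integrable_fracKernel_one_sq hH).comp_div ht.ne').const_mul _

lemma integral_fracKernel_sq_of_pos (hH : H ∈ Ioo 0 1) {t : ℝ} (ht : 0 < t) :
    ∫ x, fracKernel H t x ^ 2 = cH H * t ^ (2 * H) := by
  rw [fracKernel_sq_eq_of_pos ht, integral_const_mul,
    Measure.integral_comp_div (fun y => fracKernel H 1 y ^ 2), integral_fracKernel_one_sq hH,
    smul_eq_mul, abs_of_pos ht, rpow_sub_one ht.ne']
  field_simp

lemma integrable_fracKernel_sq (hH : H ∈ Ioo 0 1) (t : ℝ) :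
    Integrable fun x => fracKernel H t x ^ 2 := by
  rcases lt_trichotomy t 0 with ht | rfl | ht
  · obtain ⟨s, hs, rfl⟩ : ∃ s, 0 < s ∧ t = -s := ⟨-t, neg_pos.2 ht, (neg_neg t).symm⟩
    simp_rw [fracKernel_neg, neg_sq]
    exact (integrable_fracKernel_sq_of_pos hH hs).comp_add_right s
  · simp_rw [fracKernel_zero, zero_pow two_ne_zero]
    exact integrable_zero _ _ _
  · exact integrable_fracKernel_sq_of_pos hH ht

lemma integral_fracKernel_sq (hH : H ∈ Ioo 0 1) (t : ℝ) :
    ∫ x, fracKernel H t x ^ 2 = cH H * |t| ^ (2 * H) := by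
  rcases lt_trichotomy t 0 with ht | rfl | ht
  · obtain ⟨s, hs, rfl⟩ : ∃ s, 0 < s ∧ t = -s := ⟨-t, neg_pos.2 ht, (neg_neg t).symm⟩
    simp_rw [fracKernel_neg, neg_sq]
    rw [integral_add_right_eq_self (fun x => fracKernel H s x ^ 2) s,
      integral_fracKernel_sq_of_pos hH hs, abs_neg, abs_of_pos hs]
  · simp_rw [fracKernel_zero, zero_pow two_ne_zero, integral_zero, abs_zero,
      zero_rpow (by linarith [hH.1] : 2 * H ≠ 0), mul_zero]
  · rw [integral_fracKernel_sq_of_pos hH ht, abs_of_pos ht]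

end FracKernelSq

/-- The fractional kernels `φ_{t₁}, φ_{t₂}` are square-integrable on `ℝ` and their
inner product is `(c_𝐇/2)(t₁^{2𝐇} + t₂^{2𝐇} − |t₁−t₂|^{2𝐇})`. -/
theorem fracKernel_inner_product
    (H : ℝ) (hH : H ∈ Set.Ioo (0 : ℝ) 1) (t₁ t₂ : ℝ) (ht₁ : 0 ≤ t₁) (ht₂ : 0 ≤ t₂) :
    Integrable (fun x : ℝ => (fracKernel H t₁ x) ^ 2) ∧
    Integrable (fun x : ℝ => (fracKernel H t₂ x) ^ 2) ∧
    ∫ x : ℝ, fracKernel H t₁ x * fracKernel H t₂ x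
      = cH H / 2 * (t₁ ^ (2 * H) + t₂ ^ (2 * H) - |t₁ - t₂| ^ (2 * H)) := by
  have hdiff : (fun x => (fracKernel H t₁ x - fracKernel H t₂ x) ^ 2) =
      fun x => fracKernel H (t₁ - t₂) (x - t₂) ^ 2 := by
    simp_rw [fracKernel_sub_fracKernel]
  have hdiff_int : Integrable fun x => (fracKernel H t₁ x - fracKernel H t₂ x) ^ 2 := by
    rw [hdiff]
    exact (integrable_fracKernel_sq hH (t₁ - t₂)).comp_sub_right t₂
  refine ⟨integrable_fracKernel_sq hH t₁, integrable_fracKernel_sq hH t₂, ?_⟩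
  rw [integral_mul_eq_polarization (integrable_fracKernel_sq hH t₁)
      (integrable_fracKernel_sq hH t₂) hdiff_int, hdiff,
    integral_sub_right_eq_self (fun x => fracKernel H (t₁ - t₂) x ^ 2) t₂,
    integral_fracKernel_sq hH, integral_fracKernel_sq hH, integral_fracKernel_sq hH,
    abs_of_nonneg ht₁, abs_of_nonneg ht₂]
  ring
end

section
/- Let ν be a Borel probability measure on (0,∞) with Gamma-ratio moments ∫_0^∞ τ^k dν(τ) = (1/K) ∏_{i=1}^m Γ(b_i + β_i(k+1)) / ∏_{j=1}^p Γ(a_j + α_j(k+1)) for all k ∈ ℕ, where β_i > 0, b_i + β_i > 0, α_j > 0, a_j + α_j > 0, K = ∏_{i=1}^m Γ(b_i + β_i)/∏_{j=1}^p Γ(a_j + α_j), and ∑_{i=1}^m β_i − ∑_{j=1}^p α_j ∈ (0,1). Let γ be the standard Gaussian measure on ℝ, 𝐇 ∈ (0,1), t, s ≥ 0 and λ ∈ ℝ. Then ∫_0^∞ ∫_ℝ exp(i λ √τ |t−s|^𝐇 x) dγ(x) dν(τ) = (1/K) ∑_{k=0}^∞ (∏_{i=1}^m Γ(b_i + β_i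 + β_i k)/∏_{j=1}^p Γ(a_j + α_j + α_j k)) (−λ² |t−s|^{2𝐇}/2)^k / k!; i.e., the characteristic function of the increment X_t^{𝐇,A,B} − X_s^{𝐇,A,B} of the generalized Fox-H process equals (1/K) times the generalized Wright function evaluated at −λ²|t−s|^{2𝐇}/2. -/
/-!
Averaging the Gaussian characteristic function over `τ ~ ν` leaves the Laplace transform
`∫ exp (-c τ) dν(τ)` with `c = λ² |t - s| ^ (2𝐇) / 2`. Expanding the exponential and integrating
termwise turns it into the moment series, which by the Gamma-ratio moments is `1 / K` times the
Wright series at `-c`. Termwise integration is legitimate because that series converges absolutely: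
by log-convexity of `Γ`, `Γ (x + δ) / Γ x ~ x ^ δ`, so the ratio of consecutive terms behaves like
`k ^ (∑ β - ∑ α - 1) → 0`.
-/

open MeasureTheory ProbabilityTheory Real Filter Topology Finset

lemma log_Gamma_add_one {x : ℝ} (hx : 0 < x) :
    log (Gamma (x + 1)) = log (Gamma x) + log x := by
  rw [Gamma_add_one hx.ne', log_mul hx.ne' (Gamma_pos_of_pos hx).ne', add_comm]

/- Both bounds compare slopes of the convex function `log ∘ Γ` over adjacent intervals, the slope
over `[y, y + 1]` being `log y`. -/
lemma Gamma_add_le_mul_rpow {x δ : ℝ} (hx : 0 < x) (hδ : 0 ≤ δ) :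
    Gamma (x + δ) ≤ Gamma x * (x + δ) ^ δ := by
  rcases hδ.eq_or_lt with rfl | hδ
  · simp
  have hxδ : 0 < x + δ := by linarith
  have hslope := convexOn_log_Gamma.slope_mono_adjacent (x := x) (y := x + δ) (z := x + δ + 1)
    hx (by simp only [Set.mem_Ioi]; linarith) (by linarith) (by linarith)
  simp only [Function.comp_apply, log_Gamma_add_one hxδ, add_sub_cancel_left,
    div_one, div_le_iff₀ hδ] at hslope
  rw [← log_le_log_iff (Gamma_pos_of_pos hxδ) (by positivity),
    log_mul (Gamma_pos_of_pos hx).ne' (by positivity), log_rpow hxδ]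
  linarith

lemma Gamma_add_one_mul_rpow_le {x δ : ℝ} (hx : 0 < x) (hδ : 0 ≤ δ) :
    Gamma (x + 1) * x ^ δ ≤ Gamma (x + 1 + δ) := by
  rcases hδ.eq_or_lt with rfl | hδ
  · simp
  have hslope := convexOn_log_Gamma.slope_mono_adjacent (x := x) (y := x + 1) (z := x + 1 + δ)
    hx (by simp only [Set.mem_Ioi]; linarith) (by linarith) (by linarith)
  simp only [Function.comp_apply, log_Gamma_add_one hx, add_sub_cancel_left,
    div_one, le_div_iff₀ hδ] at hslope
  have h1 : 0 < x + 1 := by linarith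
  rw [← log_le_log_iff (by positivity) (Gamma_pos_of_pos (by linarith)),
    log_mul (Gamma_pos_of_pos h1).ne' (by positivity), log_rpow hx, log_Gamma_add_one hx]
  linarith

/- Wendel's limit. -/
theorem tendsto_Gamma_add_div_Gamma_mul_rpow {δ : ℝ} (hδ : 0 ≤ δ) :
    Tendsto (fun x => Gamma (x + δ) / (Gamma x * x ^ δ)) atTop (𝓝 1) := by
  have hu : Tendsto (fun x : ℝ => 1 + δ / x) atTop (𝓝 1) := by
    simpa using tendsto_const_nhds.add ((tendsto_const_nhds (x := δ)).div_atTop tendsto_id)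
  have hlower : Tendsto (fun x : ℝ => (1 + δ / x)⁻¹) atTop (𝓝 1) := by
    simpa using hu.inv₀ one_ne_zero
  have hupper : Tendsto (fun x : ℝ => (1 + δ / x) ^ δ) atTop (𝓝 1) := by
    simpa using hu.rpow_const (Or.inl one_ne_zero)
  refine tendsto_of_tendsto_of_tendsto_of_le_of_le' hlower hupper ?_ ?_
  all_goals
    filter_upwards [eventually_gt_atTop 0] with x hx
    have hΓ := Gamma_pos_of_pos hx
    have hxδ : 0 < x + δ := by linarith
    have hdecomp : 1 + δ / x = (x + δ) / x := by field_simp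
    rw [hdecomp]
  · have key := Gamma_add_one_mul_rpow_le hx hδ
    rw [add_right_comm, Gamma_add_one hxδ.ne', Gamma_add_one hx.ne'] at key
    rw [inv_div, div_le_div_iff₀ hxδ (by positivity)]
    linarith
  · rw [div_rpow hxδ.le hx.le, div_le_div_iff₀ (by positivity) (by positivity)]
    nlinarith [Gamma_add_le_mul_rpow hx hδ, rpow_pos_of_pos hx δ]

theorem tendsto_Gamma_add_mul_succ_div {B β : ℝ} (hβ : 0 < β) :
    Tendsto (fun k : ℕ => Gamma (B + β * (k + 1)) / (Gamma (B + β * k) * ((k : ℝ) + 1) ^ β))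
      atTop (𝓝 (β ^ β)) := by
  have hx : Tendsto (fun k : ℕ => B + β * k) atTop atTop :=
    tendsto_atTop_add_const_left _ B (tendsto_natCast_atTop_atTop.const_mul_atTop hβ)
  have hsucc : Tendsto (fun k : ℕ => (k : ℝ) + 1) atTop atTop :=
    tendsto_atTop_add_const_right _ 1 tendsto_natCast_atTop_atTop
  have hq : Tendsto (fun k : ℕ => (B + β * k) / ((k : ℝ) + 1)) atTop (𝓝 β) := by
    have h := ((tendsto_const_nhds (x := B - β)).div_atTop hsucc).const_add β
    rw [add_zero] at h
    refine h.congr fun k => ?_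
    field_simp
    ring
  have hlim := ((tendsto_Gamma_add_div_Gamma_mul_rpow hβ.le).comp hx).mul
    (hq.rpow_const (p := β) (Or.inl hβ.ne'))
  rw [one_mul] at hlim
  refine hlim.congr' ?_
  filter_upwards [hx.eventually_gt_atTop 0] with k hk
  have hk1 : (0 : ℝ) < k + 1 := by positivity
  simp only [Function.comp_apply]
  rw [div_rpow hk.le hk1.le, show B + β * ((k : ℝ) + 1) = B + β * k + β by ring]
  have := Gamma_pos_of_pos hk
  field_simp

section Wright

variable {ι κ : Type*} [Fintype ι] [Fintype κ]

/- The `k`-th summand of the generalized Wright series `Ψ(z)` with parameters `(B i, β i)`,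
`(A j, α j)`. -/
noncomputable def wrightTerm (B β : ι → ℝ) (A α : κ → ℝ) (z : ℝ) (k : ℕ) : ℝ :=
  (∏ i, Gamma (B i + β i * k)) / (∏ j, Gamma (A j + α j * k)) * z ^ k / k.factorial

lemma prod_Gamma_add_mul_pos {B β : ι → ℝ} (hB : ∀ i, 0 < B i) (hβ : ∀ i, 0 ≤ β i) {x : ℝ}
    (hx : 0 ≤ x) : 0 < ∏ i, Gamma (B i + β i * x) :=
  prod_pos fun i _ => Gamma_pos_of_pos (by nlinarith [hB i, hβ i])

lemma wrightTerm_succ {B β : ι → ℝ} {A α : κ → ℝ} (hB : ∀ i, 0 < B i)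
    (hβ : ∀ i, 0 ≤ β i) (hA : ∀ j, 0 < A j) (hα : ∀ j, 0 ≤ α j) (z : ℝ) (k : ℕ) :
    wrightTerm B β A α z (k + 1) = wrightTerm B β A α z k * (z *
      ((∏ i, Gamma (B i + β i * (k + 1)) / (Gamma (B i + β i * k) * ((k : ℝ) + 1) ^ β i))
        / ∏ j, Gamma (A j + α j * (k + 1)) / (Gamma (A j + α j * k) * ((k : ℝ) + 1) ^ α j))
      * ((k : ℝ) + 1) ^ (∑ i, β i - ∑ j, α j - 1)) := by
  have hk : (0 : ℝ) < k + 1 := by positivity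
  simp only [wrightTerm, prod_div_distrib, prod_mul_distrib, ← rpow_sum_of_pos hk,
    rpow_sub hk, rpow_one, Nat.factorial_succ, Nat.cast_mul, Nat.cast_succ]
  have hP := prod_Gamma_add_mul_pos hB hβ k.cast_nonneg
  have hQ := prod_Gamma_add_mul_pos hA hα k.cast_nonneg
  have hQ' := prod_Gamma_add_mul_pos hA hα hk.le
  generalize ∏ i, Gamma (B i + β i * k) = P at *
  generalize ∏ j, Gamma (A j + α j * k) = Q at *
  generalize ∏ j, Gamma (A j + α j * (k + 1)) = Q' at *
  generalize ∏ i, Gamma (B i + β i * (k + 1)) = P'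
  field_simp
  ring

theorem summable_wrightTerm {B β : ι → ℝ} {A α : κ → ℝ} (hB : ∀ i, 0 < B i)
    (hβ : ∀ i, 0 < β i) (hA : ∀ j, 0 < A j) (hα : ∀ j, 0 < α j)
    (hσ : ∑ i, β i - ∑ j, α j < 1) (z : ℝ) :
    Summable (wrightTerm B β A α z) := by
  rcases eq_or_ne z 0 with rfl | hz
  · refine summable_of_ne_finset_zero (s := {0}) fun k hk => ?_
    simp [wrightTerm, zero_pow (by simpa using hk)]
  have hne : ∀ k, wrightTerm B β A α z k ≠ 0 := fun k => by
    have hP := prod_Gamma_add_mul_pos hB (fun i => (hβ i).le) k.cast_nonneg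
    have hQ := prod_Gamma_add_mul_pos hA (fun j => (hα j).le) k.cast_nonneg
    unfold wrightTerm
    positivity
  have hpow : Tendsto (fun k : ℕ => ((k : ℝ) + 1) ^ (∑ i, β i - ∑ j, α j - 1)) atTop (𝓝 0) := by
    have h := tendsto_rpow_neg_atTop (y := 1 - (∑ i, β i - ∑ j, α j)) (by linarith)
    rw [neg_sub] at h
    exact h.comp (tendsto_atTop_add_const_right _ 1 tendsto_natCast_atTop_atTop)
  have hratio := ((tendsto_const_nhds (x := z)).mul
    ((tendsto_finsetProd univ fun i _ => tendsto_Gamma_add_mul_succ_div (B := B i) (hβ i)).div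
      (tendsto_finsetProd univ fun j _ => tendsto_Gamma_add_mul_succ_div (B := A j) (hα j))
      (prod_pos fun j _ => rpow_pos_of_pos (hα j) _).ne')).mul hpow
  rw [mul_zero] at hratio
  refine summable_of_ratio_test_tendsto_lt_one zero_lt_one (Eventually.of_forall hne) ?_
  simpa [wrightTerm_succ hB (fun i => (hβ i).le) hA (fun j => (hα j).le), norm_mul, hne] using
    hratio.norm

end Wright

theorem integral_exp_mul_eq_tsum_moments {ν : Measure ℝ} {z : ℝ}
    (hint : ∀ k : ℕ, Integrable (fun τ => τ ^ k) ν)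
    (hsum : Summable fun k : ℕ => |z| ^ k / k.factorial * ∫ τ, |τ| ^ k ∂ν) :
    ∫ τ, exp (z * τ) ∂ν = ∑' k : ℕ, z ^ k / k.factorial * ∫ τ, τ ^ k ∂ν := by
  have hexp : ∀ τ, exp (z * τ) = ∑' k : ℕ, z ^ k / k.factorial * τ ^ k := fun τ => by
    rw [exp_eq_exp_ℝ, NormedSpace.exp_eq_tsum_div]
    simp only [mul_pow, div_mul_eq_mul_div]
  have hnorm : ∀ k : ℕ, ∫ τ, ‖z ^ k / k.factorial * τ ^ k‖ ∂ν
      = |z| ^ k / k.factorial * ∫ τ, |τ| ^ k ∂ν := fun k => by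
    simp only [norm_mul, norm_div, norm_pow, Real.norm_eq_abs, Nat.abs_cast, integral_const_mul]
  simp only [hexp, ← integral_const_mul]
  exact (integral_tsum_of_summable_integral_norm (fun k => (hint k).const_mul _)
    (by simpa only [hnorm] using hsum)).symm

lemma integral_cexp_I_mul_gaussianReal (u : ℝ) :
    ∫ x, Complex.exp (Complex.I * ((u * x : ℝ) : ℂ)) ∂gaussianReal 0 1
      = ((exp (-(u ^ 2 / 2)) : ℝ) : ℂ) := by
  have h := charFun_gaussianReal (μ := 0) (v := 1) u
  rw [charFun_apply_real] at h
  push_cast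
  convert h using 2
  · ext x; ring_nf
  · push_cast; ring

theorem generalized_FoxH_increment_characteristic_function_general
    (m p : ℕ) (b β : Fin m → ℝ) (a α : Fin p → ℝ)
    (hβ : ∀ i, 0 < β i) (hbβ : ∀ i, 0 < b i + β i)
    (hα : ∀ j, 0 < α j) (haα : ∀ j, 0 < a j + α j)
    (hastar : (∑ i, β i) - (∑ j, α j) ∈ Set.Ioo (0 : ℝ) 1)
    (K : ℝ)
    (ν : Measure ℝ) (hsupp : ν (Set.Iic 0) = 0)
    (hint : ∀ k : ℕ, Integrable (fun τ : ℝ => τ ^ k) ν)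
    (hmom : ∀ k : ℕ, ∫ τ, τ ^ k ∂ν
      = (1 / K) * (∏ i, Real.Gamma (b i + β i * (k + 1)))
          / (∏ j, Real.Gamma (a j + α j * (k + 1))))
    (H : ℝ) (t s lam : ℝ) :
    ∫ τ, (∫ x, Complex.exp
          (Complex.I * ((lam * Real.sqrt τ * |t - s| ^ H * x : ℝ) : ℂ))
        ∂(gaussianReal 0 1)) ∂ν
      = ((((1 : ℝ) / K) * ∑' k : ℕ,
          ((∏ i, Real.Gamma (b i + β i + β i * k)) / (∏ j, Real.Gamma (a j + α j + α j * k)))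
            * (-(lam ^ 2) * |t - s| ^ (2 * H) / 2) ^ k / (Nat.factorial k : ℝ) : ℝ) : ℂ) := by
  set z := -(lam ^ 2) * |t - s| ^ (2 * H) / 2 with hz
  have hpos : ∀ᵐ τ ∂ν, 0 < τ := by
    filter_upwards [measure_eq_zero_iff_ae_notMem.mp hsupp] with τ hτ
    simpa using hτ
  have hgauss : ∀ᵐ τ ∂ν, ∫ x, Complex.exp
      (Complex.I * ((lam * Real.sqrt τ * |t - s| ^ H * x : ℝ) : ℂ)) ∂(gaussianReal 0 1)
        = ((exp (z * τ) : ℝ) : ℂ) := by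
    filter_upwards [hpos] with τ hτ
    rw [integral_cexp_I_mul_gaussianReal, mul_pow, mul_pow, sq_sqrt hτ.le,
      ← rpow_mul_natCast (abs_nonneg _)]
    congr 3
    rw [hz, Nat.cast_ofNat, mul_comm H]
    ring
  have hterm : ∀ (w : ℝ) (k : ℕ), w ^ k / k.factorial * ∫ τ, τ ^ k ∂ν
      = 1 / K * wrightTerm (fun i => b i + β i) β (fun j => a j + α j) α w k := fun w k => by
    have hshift : ∀ x y : ℝ, x + y * (k + 1) = x + y + y * k := fun x y => by ring
    simp only [hmom, wrightTerm, hshift]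
    ring
  have hsum : Summable fun k : ℕ => |z| ^ k / k.factorial * ∫ τ, |τ| ^ k ∂ν := by
    have habs : ∀ k : ℕ, ∫ τ, |τ| ^ k ∂ν = ∫ τ, τ ^ k ∂ν := fun k =>
      integral_congr_ae (hpos.mono fun τ hτ => by simp only [abs_of_pos hτ])
    simp only [habs, hterm]
    exact (summable_wrightTerm hbβ hβ haα hα hastar.2 |z|).mul_left _
  rw [integral_congr_ae hgauss, integral_complex_ofReal, integral_exp_mul_eq_tsum_moments hint hsum]
  simp only [hterm, tsum_mul_left]
  rfl

/-- The characteristic function of the increment `X_t^{𝐇,A,B} − X_s^{𝐇,A,B}` of the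
generalized Fox-H process (realized as `√Y |t−s|^𝐇 G` with `Y ~ ν` having Gamma-ratio
moments, independent of the standard Gaussian `G`) equals `(1/K)` times the generalized
Wright function evaluated at `−λ²|t−s|^{2𝐇}/2`. -/
theorem generalized_FoxH_increment_characteristic_function
    (m p : ℕ) (b β : Fin m → ℝ) (a α : Fin p → ℝ)
    (hβ : ∀ i, 0 < β i) (hbβ : ∀ i, 0 < b i + β i)
    (hα : ∀ j, 0 < α j) (haα : ∀ j, 0 < a j + α j)
    (hastar : (∑ i, β i) - (∑ j, α j) ∈ Set.Ioo (0 : ℝ) 1)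
    (K : ℝ) (hK : K = (∏ i, Real.Gamma (b i + β i)) / (∏ j, Real.Gamma (a j + α j)))
    (ν : Measure ℝ) [IsProbabilityMeasure ν] (hsupp : ν (Set.Iic 0) = 0)
    (hint : ∀ k : ℕ, Integrable (fun τ : ℝ => τ ^ k) ν)
    (hmom : ∀ k : ℕ, ∫ τ, τ ^ k ∂ν
      = (1 / K) * (∏ i, Real.Gamma (b i + β i * (k + 1)))
          / (∏ j, Real.Gamma (a j + α j * (k + 1))))
    (H : ℝ) (hH : H ∈ Set.Ioo (0 : ℝ) 1) (t s lam : ℝ) (ht : 0 ≤ t) (hs : 0 ≤ s) :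
    ∫ τ, (∫ x, Complex.exp
          (Complex.I * ((lam * Real.sqrt τ * |t - s| ^ H * x : ℝ) : ℂ))
        ∂(gaussianReal 0 1)) ∂ν
      = ((((1 : ℝ) / K) * ∑' k : ℕ,
          ((∏ i, Real.Gamma (b i + β i + β i * k)) / (∏ j, Real.Gamma (a j + α j + α j * k)))
            * (-(lam ^ 2) * |t - s| ^ (2 * H) / 2) ^ k / (Nat.factorial k : ℝ) : ℝ) : ℂ) :=
  generalized_FoxH_increment_characteristic_function_general m p b β a α hβ hbβ hα haα hastar K ν
    hsupp hint hmom H t s lam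
end
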